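/- The 2×2-block bound exceeds the 1×1 bound: sup over the 2×2 simplex of the block entropy functional F is strictly greater than sup_{p∈(0,1)} (1/2)(h_B(p) + (1−p)^4 ln 2). -/
import Mathlib


/-- The binary entropy function. -/
noncomputable def hB (p : ℝ) : ℝ := -p * Real.log p - (1 - p) * Real.log (1 - p)

/-- The 2×2-block Bernoulli lower bound functional on ℤ² (equations
(3.4)–(3.5)). -/
noncomputable def F22 (p₀ p₁ p₂₁ p₂₂ p₃ p₄ : ℝ) : ℝ :=
  (1 / 4) * (-p₀ * Real.log p₀ - 4 * p₁ * Real.log p₁ -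
    4 * p₂₁ * Real.log p₂₁ - 2 * p₂₂ * Real.log p₂₂ -
    4 * p₃ * Real.log p₃ - p₄ * Real.log p₄ +
    (p₀ + 2 * (p₀ + 2 * p₁ + p₂₁) ^ 2 +
      (p₀ + 3 * p₁ + 2 * p₂₁ + p₂₂ + p₃) ^ 4) * Real.log 2)

lemma hB_eq_binEntropy (p : ℝ) : hB p = Real.binEntropy p := by
  unfold hB Real.binEntropy
  rw [Real.log_inv, Real.log_inv]
  ring

lemma ent_le (p : ℝ) (hp : 0 < p) : -p * Real.log p ≤ 1 - p := by
  have h := Real.log_le_sub_one_of_pos (inv_pos.mpr hp)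
  rw [Real.log_inv] at h
  have hp' := hp.le
  have : p * (-Real.log p) ≤ p * (p⁻¹ - 1) := by
    exact mul_le_mul_of_nonneg_left h hp'
  have hinv : p * (p⁻¹ - 1) = 1 - p := by
    field_simp
  nlinarith

lemma log_pow2 (n : ℕ) : Real.log ((1 : ℝ) / 2 ^ n) = -(n * Real.log 2) := by
  rw [one_div, Real.log_inv, Real.log_pow]

set_option maxHeartbeats 1000000 in
/-- The 2×2-block bound strictly exceeds the 1×1 bound:
`sup F22 > sup_{p∈(0,1)} (1/2)(h_B(p) + (1-p)^4 ln 2)`. -/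
theorem two_by_two_beats_one_by_one :
    sSup {x : ℝ | ∃ p₀ p₁ p₂₁ p₂₂ p₃ p₄ : ℝ,
        0 < p₀ ∧ 0 < p₁ ∧ 0 < p₂₁ ∧ 0 < p₂₂ ∧ 0 < p₃ ∧ 0 < p₄ ∧
        p₀ + 4 * p₁ + 4 * p₂₁ + 2 * p₂₂ + 4 * p₃ + p₄ = 1 ∧
        x = F22 p₀ p₁ p₂₁ p₂₂ p₃ p₄} >
      sSup {x : ℝ | ∃ p ∈ Set.Ioo (0 : ℝ) 1,
        x = (1 / 2) * (hB p + (1 - p) ^ 4 * Real.log 2)} := by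
  have l2pos : (0 : ℝ) < Real.log 2 := Real.log_pos (by norm_num)
  have l2le : Real.log 2 ≤ 1 := by
    have := Real.log_le_sub_one_of_pos (show (0:ℝ) < 2 by norm_num)
    linarith
  -- upper bound for the 1×1 set
  have hBle : sSup {x : ℝ | ∃ p ∈ Set.Ioo (0 : ℝ) 1,
      x = (1 / 2) * (hB p + (1 - p) ^ 4 * Real.log 2)} ≤ Real.log 2 := by
    apply Real.sSup_le _ l2pos.le
    rintro x ⟨p, ⟨hp0, hp1⟩, rfl⟩
    have h1 : hB p ≤ Real.log 2 := by
      rw [hB_eq_binEntropy]; exact Real.binEntropy_le_log_two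
    have h2 : (1 - p) ^ 4 ≤ 1 := by
      apply pow_le_one₀ <;> linarith
    nlinarith [pow_nonneg (by linarith : (0:ℝ) ≤ 1 - p) 4]
  -- the witness value
  set v : ℝ := F22 (1/2) (1/16) (1/32) (1/32) (1/128) (1/32) with hv
  have hval : v = (1224463857 / 1073741824) * Real.log 2 := by
    have e1 : Real.log ((1:ℝ)/2) = -(1 * Real.log 2) := by
      simpa using log_pow2 1
    have e4 : Real.log ((1:ℝ)/16) = -(4 * Real.log 2) := by
      have := log_pow2 4; norm_num at this ⊢; linarith
    have e5 : Real.log ((1:ℝ)/32) = -(5 * Real.log 2) := by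
      have := log_pow2 5; norm_num at this ⊢; linarith
    have e7 : Real.log ((1:ℝ)/128) = -(7 * Real.log 2) := by
      have := log_pow2 7; norm_num at this ⊢; linarith
    rw [hv]
    unfold F22
    rw [e1, e4, e5, e7]
    ring
  have hvgt : Real.log 2 < v := by
    rw [hval]; nlinarith
  -- the 2×2 set is bounded above by 5
  have hbdd : BddAbove {x : ℝ | ∃ p₀ p₁ p₂₁ p₂₂ p₃ p₄ : ℝ,
      0 < p₀ ∧ 0 < p₁ ∧ 0 < p₂₁ ∧ 0 < p₂₂ ∧ 0 < p₃ ∧ 0 < p₄ ∧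
      p₀ + 4 * p₁ + 4 * p₂₁ + 2 * p₂₂ + 4 * p₃ + p₄ = 1 ∧
      x = F22 p₀ p₁ p₂₁ p₂₂ p₃ p₄} := by
    refine ⟨5, ?_⟩
    rintro x ⟨p₀, p₁, p₂₁, p₂₂, p₃, p₄, h0, h1, h21, h22, h3, h4, hsum, rfl⟩
    have e0 := ent_le p₀ h0
    have e1 := ent_le p₁ h1
    have e21 := ent_le p₂₁ h21
    have e22 := ent_le p₂₂ h22
    have e3 := ent_le p₃ h3
    have e4 := ent_le p₄ h4
    have hs : p₀ + 2 * p₁ + p₂₁ ≤ 1 := by linarith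
    have hs0 : 0 ≤ p₀ + 2 * p₁ + p₂₁ := by linarith
    have hsq : (p₀ + 2 * p₁ + p₂₁) ^ 2 ≤ 1 := pow_le_one₀ hs0 hs
    have hsq0 : 0 ≤ (p₀ + 2 * p₁ + p₂₁) ^ 2 := sq_nonneg _
    have ht : p₀ + 3 * p₁ + 2 * p₂₁ + p₂₂ + p₃ ≤ 1 := by linarith
    have ht0 : 0 ≤ p₀ + 3 * p₁ + 2 * p₂₁ + p₂₂ + p₃ := by positivity
    have hq : (p₀ + 3 * p₁ + 2 * p₂₁ + p₂₂ + p₃) ^ 4 ≤ 1 := pow_le_one₀ ht0 ht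
    have hq0 : 0 ≤ (p₀ + 3 * p₁ + 2 * p₂₁ + p₂₂ + p₃) ^ 4 := by positivity
    have hC : 0 ≤ p₀ + 2 * (p₀ + 2 * p₁ + p₂₁) ^ 2 +
        (p₀ + 3 * p₁ + 2 * p₂₁ + p₂₂ + p₃) ^ 4 := by positivity
    have hC4 : p₀ + 2 * (p₀ + 2 * p₁ + p₂₁) ^ 2 +
        (p₀ + 3 * p₁ + 2 * p₂₁ + p₂₂ + p₃) ^ 4 ≤ 4 := by linarith
    unfold F22
    have hp : (p₀ + 2 * (p₀ + 2 * p₁ + p₂₁) ^ 2 +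
        (p₀ + 3 * p₁ + 2 * p₂₁ + p₂₂ + p₃) ^ 4) * Real.log 2 ≤ 4 * 1 :=
      mul_le_mul hC4 l2le l2pos.le (by norm_num)
    linarith
  -- membership of the witness
  have hmem : v ∈ {x : ℝ | ∃ p₀ p₁ p₂₁ p₂₂ p₃ p₄ : ℝ,
      0 < p₀ ∧ 0 < p₁ ∧ 0 < p₂₁ ∧ 0 < p₂₂ ∧ 0 < p₃ ∧ 0 < p₄ ∧
      p₀ + 4 * p₁ + 4 * p₂₁ + 2 * p₂₂ + 4 * p₃ + p₄ = 1 ∧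
      x = F22 p₀ p₁ p₂₁ p₂₂ p₃ p₄} := by
    exact ⟨1/2, 1/16, 1/32, 1/32, 1/128, 1/32, by norm_num, by norm_num, by norm_num,
      by norm_num, by norm_num, by norm_num, by norm_num, rfl⟩
  have hle : v ≤ sSup {x : ℝ | ∃ p₀ p₁ p₂₁ p₂₂ p₃ p₄ : ℝ,
      0 < p₀ ∧ 0 < p₁ ∧ 0 < p₂₁ ∧ 0 < p₂₂ ∧ 0 < p₃ ∧ 0 < p₄ ∧
      p₀ + 4 * p₁ + 4 * p₂₁ + 2 * p₂₂ + 4 * p₃ + p₄ = 1 ∧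
      x = F22 p₀ p₁ p₂₁ p₂₂ p₃ p₄} := le_csSup hbdd hmem
  calc sSup {x : ℝ | ∃ p ∈ Set.Ioo (0 : ℝ) 1,
        x = (1 / 2) * (hB p + (1 - p) ^ 4 * Real.log 2)} ≤ Real.log 2 := hBle
    _ < v := hvgt
    _ ≤ _ := hle
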